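/- Let L be a finite lattice and let (γ, δ, θ) be a pentagon in L. Then there exists an element δ' of L with δ ≤ δ', δ' covered by θ (i.e. δ' ⋖ θ), such that (γ, δ', θ) is again a pentagon in L. -/

import Mathlib

/-- In a finite lattice, the critical quotient of a pentagon `(γ, δ, θ)` can
be shrunk to a covering pair: there is `δ'` with `δ ≤ δ'`, `δ' ⋖ θ`, and
`(γ, δ', θ)` is again a pentagon. -/
theorem pentagon_shrink_to_cover {L : Type*} [Lattice L] [Fintype L]
    (γ δ θ : L)
    (hpent : δ < θ ∧ θ ≤ γ ⊔ δ ∧ γ ⊓ θ ≤ δ) :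
    ∃ δ' : L, δ ≤ δ' ∧ δ' ⋖ θ ∧ (δ' < θ ∧ θ ≤ γ ⊔ δ' ∧ γ ⊓ θ ≤ δ') := by
  obtain ⟨hlt, hsup, hinf⟩ := hpent
  have hfin : ({x : L | δ ≤ x ∧ x < θ}).Finite := Set.toFinite _
  obtain ⟨δ', ⟨hdle, hdθ⟩, hmax⟩ :=
    Set.Finite.exists_maximalFor id _ hfin ⟨δ, le_refl δ, hlt⟩
  refine ⟨δ', hdle, ⟨hdθ, fun y hy hyθ => ?_⟩, hdθ,
    hsup.trans (sup_le_sup_left hdle γ), hinf.trans hdle⟩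
  exact absurd (hmax ⟨hdle.trans hy.le, hyθ⟩ hy.le) (not_le_of_gt hy)
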